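/- Let A be a commutative ring, let t ∈ A, and let J ⊆ A be an ideal such that the quotient ring A/J is an integral domain and t ∉ J. Then for every integer n ≥ 0, the map sending the class of a ∈ A to the class of a·tⁿ induces a well-defined isomorphism of A-modules A/(tA + J) ≅ (tⁿA + J)/(tⁿ⁺¹A + J). -/
import Mathlib


/-- Let `A` be a commutative ring, `t ∈ A`, and `J ⊆ A` an ideal such that
`A/J` is an integral domain and `t ∉ J`.  Then for every `n ≥ 0`, the map sending the class of
`a` to the class of `a * tⁿ` induces a well-defined isomorphism of `A`-modules
`A/(tA + J) ≃ (tⁿA + J)/(tⁿ⁺¹A + J)`. -/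
theorem quotient_iso_of_mul_pow (A : Type*) [CommRing A] (t : A) (J : Ideal A)
    (hdom : IsDomain (A ⧸ J)) (ht : t ∉ J) (n : ℕ) :
    ∃ e : (A ⧸ (Ideal.span {t} ⊔ J)) ≃ₗ[A]
        ((↥(Ideal.span {t ^ n} ⊔ J : Ideal A)) ⧸
          (Submodule.comap (Ideal.span {t ^ n} ⊔ J : Ideal A).subtype
            (Ideal.span {t ^ (n + 1)} ⊔ J : Ideal A))),
      ∀ a : A,
        e (Submodule.Quotient.mk a) =
          Submodule.Quotient.mk
            ⟨a * t ^ n,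
              Submodule.mem_sup_left
                (Ideal.mul_mem_left _ a (Ideal.subset_span (Set.mem_singleton _)))⟩ := by
  set M : Ideal A := Ideal.span {t ^ n} ⊔ J
  set N : Submodule A M := Submodule.comap M.subtype (Ideal.span {t ^ (n + 1)} ⊔ J)
  have hmem : ∀ a : A, a * t ^ n ∈ M := fun a =>
    Submodule.mem_sup_left (Ideal.mul_mem_left _ a (Ideal.subset_span (Set.mem_singleton _)))
  -- the linear map A → M
  let g : A →ₗ[A] M :=
    { toFun := fun a => ⟨a * t ^ n, hmem a⟩
      map_add' := fun a b => by ext; simp [add_mul]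
      map_smul' := fun c a => by ext; simp [mul_assoc] }
  let f : A →ₗ[A] (M ⧸ N) := (Submodule.mkQ N).comp g
  have htn : (Ideal.Quotient.mk J (t ^ n)) ≠ 0 := by
    rw [map_pow]
    exact pow_ne_zero n (by simpa [Ideal.Quotient.eq_zero_iff_mem] using ht)
  have hker : LinearMap.ker f = Ideal.span {t} ⊔ J := by
    ext a
    simp only [LinearMap.mem_ker, f, LinearMap.comp_apply, Submodule.mkQ_apply,
      Submodule.Quotient.mk_eq_zero, N, Submodule.mem_comap, Submodule.subtype_apply]
    show a * t ^ n ∈ Ideal.span {t ^ (n + 1)} ⊔ J ↔ a ∈ Ideal.span {t} ⊔ J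
    constructor
    · intro h
      rw [Ideal.mem_span_singleton_sup] at h
      obtain ⟨c, z, hz, hcz⟩ := h
      have hJ : a - c * t ∈ J := by
        have : (a - c * t) * t ^ n = z := by linear_combination -hcz
        rw [← Ideal.Quotient.eq_zero_iff_mem] at hz ⊢
        have h0 : (Ideal.Quotient.mk J (a - c * t)) * (Ideal.Quotient.mk J (t ^ n)) = 0 := by
          rw [← map_mul, this, hz]
        exact (mul_eq_zero.mp h0).resolve_right htn
      have : a = c * t + (a - c * t) := by ring
      rw [this]
      exact add_mem (Submodule.mem_sup_left (Ideal.mul_mem_left _ c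
        (Ideal.subset_span (Set.mem_singleton _)))) (Submodule.mem_sup_right hJ)
    · intro h
      rw [Ideal.mem_span_singleton_sup] at h
      obtain ⟨c, z, hz, hcz⟩ := h
      have : a * t ^ n = c * t ^ (n + 1) + z * t ^ n := by
        rw [← hcz]; ring
      rw [this]
      exact add_mem (Submodule.mem_sup_left (Ideal.mul_mem_left _ c
        (Ideal.subset_span (Set.mem_singleton _))))
        (Submodule.mem_sup_right (Ideal.mul_mem_right _ _ hz))
  have hsurj : Function.Surjective f := by
    rw [← LinearMap.range_eq_top]
    rw [Submodule.eq_top_iff']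
    intro x
    obtain ⟨y, rfl⟩ := Submodule.mkQ_surjective N x
    obtain ⟨x, hx⟩ := y
    have hx' := hx
    rw [Ideal.mem_span_singleton_sup] at hx'
    obtain ⟨c, z, hz, hcz⟩ := hx'
    refine ⟨c, ?_⟩
    show Submodule.mkQ N ⟨c * t ^ n, hmem c⟩ = Submodule.mkQ N ⟨x, hx⟩
    rw [Submodule.mkQ_apply, Submodule.mkQ_apply, Submodule.Quotient.eq]
    show c * t ^ n - x ∈ Ideal.span {t ^ (n + 1)} ⊔ J
    have : c * t ^ n - x = -z := by rw [← hcz]; ring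
    rw [this]
    exact neg_mem (Submodule.mem_sup_right hz)
  refine ⟨(Submodule.quotEquivOfEq _ _ hker.symm).trans
    (f.quotKerEquivOfSurjective hsurj), fun a => ?_⟩
  rfl
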